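/- arXiv:1806.00822 — 6 statements merged into one kernel-verified Lean document; each statement's English description precedes it below -/
import Mathlib

section
/- Let a ∈ K∖F. A map H : A → A is an F-automorphism of the nonassociative cyclic algebra A = (K/F,σ,a) if and only if there exist j ∈ {0,…,m−1} and k ∈ K^× with σ^j(a) = N_{K/F}(k)·a such that H = H_{σ^j,k}. -/
/-!
Since `a ∉ F`, the left nucleus of `A` is `K = K t^0`: for `i ≠ 0` the element `x t^i` does not
associate with `t^{m-1}` and `t`, because `σ^{i-1}(a) ≠ σ^i(a)`. An automorphism `H` preserves the
left nucleus, so it restricts to an `F`-automorphism of `K`, which is some `σ^j`. Applying `H` to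
`t ∘ x = σ(x) t` forces `H(t) = k t`, because `σ^i = σ` only for `i = 1`; then
`H(t^i) = (∏_{l<i} σ^l(k)) t^i`, so `H = H_{σ^j,k}`, and applying `H` to `t^{m-1} ∘ t = a` gives
`σ^j(a) = N(k) a`. Conversely, this norm condition is exactly what makes `H_{σ^j,k}` multiplicative
on the products `t^i ∘ t^l` with `i + l ≥ m`. In coordinates, `x t^i` is `Pi.single i x`.
-/

open Finset

/-- The unit element `t^0` of the nonassociative cyclic algebra, in coordinates. -/
def cycOne (K : Type*) [Zero K] [One K] (m : ℕ) : Fin m → K :=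
  fun k => if (k : ℕ) = 0 then 1 else 0

/-- The embedding `x ↦ x t^0` of `K` into the nonassociative cyclic algebra. -/
def cycEmb (K : Type*) [Zero K] (m : ℕ) (x : K) : Fin m → K :=
  fun i => if (i : ℕ) = 0 then x else 0

section

variable {F K : Type*} [Field F] [Field K] [Algebra F K]

/-- Coordinates of the product in the nonassociative cyclic algebra `(K/F, σ, a)`:
`(x t^i) ∘ (y t^j) = x σ^i(y) t^{i+j}` if `i+j < m` and
`(x t^i) ∘ (y t^j) = x σ^i(y) σ^{i+j-m}(a) t^{i+j-m}` if `i+j ≥ m`. -/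
def cycMul (m : ℕ) (σ : K ≃ₐ[F] K) (a : K) (u v : Fin m → K) : Fin m → K :=
  fun k =>
    (∑ i : Fin m, ∑ j : Fin m,
        if (i : ℕ) + (j : ℕ) = (k : ℕ) then u i * (σ ^ (i : ℕ)) (v j) else 0) +
      ∑ i : Fin m, ∑ j : Fin m,
        if (i : ℕ) + (j : ℕ) = (k : ℕ) + m then
          u i * (σ ^ (i : ℕ)) (v j) * (σ ^ (k : ℕ)) a
        else 0

/-- The field norm `N_{K/F}(k) = ∏_{l=0}^{m-1} σ^l(k)`. -/
def cycNorm (m : ℕ) (σ : K ≃ₐ[F] K) (k : K) : K :=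
  ∏ l ∈ Finset.range m, (σ ^ l) k

/-- The map `H_{τ,k} : x t^i ↦ τ(x) (∏_{l=0}^{i-1} σ^l(k)) t^i`. -/
def cycH (m : ℕ) (σ τ : K ≃ₐ[F] K) (k : K) (u : Fin m → K) : Fin m → K :=
  fun i => τ (u i) * ∏ l ∈ Finset.range (i : ℕ), (σ ^ l) k

/-- The map `G_c : x t^i ↦ x c⁻¹ σ^i(c) t^i`. -/
def cycG (m : ℕ) (σ : K ≃ₐ[F] K) (c : K) (u : Fin m → K) : Fin m → K :=
  fun i => u i * c⁻¹ * (σ ^ (i : ℕ)) c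

/-- `H` is an `F`-automorphism of the nonassociative cyclic algebra `(K/F, σ, a)`. -/
def IsCycAut (m : ℕ) (σ : K ≃ₐ[F] K) (a : K) (H : (Fin m → K) → (Fin m → K)) : Prop :=
  Function.Bijective H ∧
    (∀ u v, H (u + v) = H u + H v) ∧
    (∀ (c : F) (u : Fin m → K), H (c • u) = c • H u) ∧
    H (cycOne K m) = cycOne K m ∧
    ∀ u v, H (cycMul m σ a u v) = cycMul m σ a (H u) (H v)

/-- `H` is an inner `F`-automorphism of `(K/F, σ, a)`:
`H(z) = (w_l ∘ z) ∘ w` for some `w ≠ 0` with left inverse `w_l`. -/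
def IsCycInner (m : ℕ) (σ : K ≃ₐ[F] K) (a : K) (H : (Fin m → K) → (Fin m → K)) : Prop :=
  ∃ w wl : Fin m → K, w ≠ 0 ∧ cycMul m σ a wl w = cycOne K m ∧
    ∀ z, H z = cycMul m σ a (cycMul m σ a wl z) w

end


lemma Fin.sum_ite_val_add_eq {M : Type*} [AddCommMonoid M] {m : ℕ} (n q : ℕ) (f : Fin m → M) :
    (∑ i : Fin m, if (i : ℕ) + n = q then f i else 0) =
      if h : n ≤ q ∧ q - n < m then f ⟨q - n, h.2⟩ else 0 := by
  split_ifs with h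
  · rw [Fintype.sum_eq_single ⟨q - n, h.2⟩
      fun i hi => if_neg fun hq => hi (Fin.ext (by simp; omega))]
    simp [h.1]
  · exact sum_eq_zero fun i _ => if_neg (by omega)

lemma cycOne_eq_single (K : Type*) [Zero K] [One K] (m : ℕ) [NeZero m] :
    cycOne K m = Pi.single 0 1 := by
  funext p
  simp only [Pi.single_apply, cycOne, Fin.val_eq_zero_iff]

section Product

variable {F K : Type*} [Field F] [Field K] [Algebra F K] {m : ℕ} (σ : K ≃ₐ[F] K) (a : K)

lemma cycMul_single_apply (u : Fin m → K) (j p : Fin m) (y : K) :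
    cycMul m σ a u (Pi.single j y) p =
      (∑ i : Fin m, if (i : ℕ) + j = p then u i * (σ ^ (i : ℕ)) y else 0) +
        ∑ i : Fin m, if (i : ℕ) + j = p + m then u i * (σ ^ (i : ℕ)) y * (σ ^ (p : ℕ)) a
          else 0 := by
  unfold cycMul
  congr 1 <;> refine sum_congr rfl fun i _ => ?_ <;>
    rw [Fintype.sum_eq_single j fun j' hj' => by simp [Pi.single_eq_of_ne hj'],
      Pi.single_eq_same]

lemma cycMul_single_apply_of_le (u : Fin m → K) {j p : Fin m} (y : K) (h : (j : ℕ) ≤ p) :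
    cycMul m σ a u (Pi.single j y) p = u ⟨p - j, by omega⟩ * (σ ^ ((p : ℕ) - j)) y := by
  rw [cycMul_single_apply, Fin.sum_ite_val_add_eq, Fin.sum_ite_val_add_eq,
    dif_pos ⟨h, by omega⟩, dif_neg (by omega), add_zero]

lemma cycMul_single_apply_of_lt (u : Fin m → K) {j p : Fin m} (y : K) (h : (p : ℕ) < j) :
    cycMul m σ a u (Pi.single j y) p =
      u ⟨p + m - j, by omega⟩ * (σ ^ ((p : ℕ) + m - j)) y * (σ ^ (p : ℕ)) a := by
  rw [cycMul_single_apply, Fin.sum_ite_val_add_eq, Fin.sum_ite_val_add_eq,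
    dif_neg (by omega), dif_pos ⟨by omega, by omega⟩, zero_add]

lemma cycMul_single_single_of_lt {i j : Fin m} (h : (i : ℕ) + j < m) (x y : K) :
    cycMul m σ a (Pi.single i x) (Pi.single j y) =
      Pi.single ⟨i + j, h⟩ (x * (σ ^ (i : ℕ)) y) := by
  funext p
  rcases le_or_gt (j : ℕ) p with hjp | hpj
  · rw [cycMul_single_apply_of_le σ a _ y hjp]
    simp only [Pi.single_apply, Fin.ext_iff]
    split_ifs <;> first | omega | simp_all
  · rw [cycMul_single_apply_of_lt σ a _ y hpj]
    simp only [Pi.single_apply, Fin.ext_iff]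
    split_ifs <;> first | omega | simp_all

lemma cycMul_single_single_of_le {i j : Fin m} (h : m ≤ (i : ℕ) + j) (x y : K) :
    cycMul m σ a (Pi.single i x) (Pi.single j y) =
      Pi.single ⟨i + j - m, by omega⟩ (x * (σ ^ (i : ℕ)) y * (σ ^ ((i : ℕ) + j - m)) a) := by
  funext p
  rcases le_or_gt (j : ℕ) p with hjp | hpj
  · rw [cycMul_single_apply_of_le σ a _ y hjp]
    simp only [Pi.single_apply, Fin.ext_iff]
    split_ifs <;> first | omega | simp_all
  · rw [cycMul_single_apply_of_lt σ a _ y hpj]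
    simp only [Pi.single_apply, Fin.ext_iff]
    split_ifs <;> first | omega | simp_all

lemma cycMul_single_zero_left [NeZero m] (x : K) (v : Fin m → K) :
    cycMul m σ a (Pi.single 0 x) v = x • v := by
  funext p
  have hzero : ∀ i : Fin m, i ≠ 0 → (Pi.single 0 x : Fin m → K) i = 0 :=
    fun i hi => by simp [hi]
  unfold cycMul
  rw [Fintype.sum_eq_single 0 fun i hi => sum_eq_zero fun j _ => by simp [hzero i hi],
    Fintype.sum_eq_single 0 fun i hi => sum_eq_zero fun j _ => by simp [hzero i hi]]
  simp only [Fin.coe_ofNat_eq_mod, Nat.zero_mod, zero_add, Fin.val_inj, Pi.single_eq_same,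
    pow_zero, AlgEquiv.one_apply, sum_ite_eq', mem_univ, ↓reduceIte, AlgEquiv.coe_pow,
    Pi.smul_apply, smul_eq_mul, add_eq_left]
  exact sum_eq_zero fun j _ => if_neg (by omega)

lemma cycMul_smul_left (x : K) (u v : Fin m → K) :
    cycMul m σ a (x • u) v = x • cycMul m σ a u v := by
  funext p
  simp only [cycMul, Pi.smul_apply, smul_eq_mul, mul_sum, mul_ite, mul_zero, mul_add, mul_assoc]

lemma cycMul_single_zero_assoc [NeZero m] (x : K) (u v : Fin m → K) :
    cycMul m σ a (cycMul m σ a (Pi.single 0 x) u) v =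
      cycMul m σ a (Pi.single 0 x) (cycMul m σ a u v) := by
  rw [cycMul_single_zero_left, cycMul_smul_left, cycMul_single_zero_left]

lemma cycMul_single_zero_single [NeZero m] (x y : K) (j : Fin m) :
    cycMul m σ a (Pi.single 0 x) (Pi.single j y) = Pi.single j (x * y) := by
  rw [cycMul_single_zero_left, ← Pi.single_smul', smul_eq_mul]

end Product

lemma eq_cycH_of_map_single {F K : Type*} [Field F] [Field K] [Algebra F K] {m : ℕ}
    (σ τ : K ≃ₐ[F] K) (k : K) {H : (Fin m → K) → (Fin m → K)}
    (hadd : ∀ u v, H (u + v) = H u + H v)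
    (hsingle : ∀ i x, H (Pi.single i x) = Pi.single i (τ x * ∏ l ∈ range i, (σ ^ l) k)) :
    H = cycH m σ τ k := by
  funext u
  conv_lhs => rw [← univ_sum_single u]
  rw [show H (∑ i, Pi.single i (u i)) = ∑ i, H (Pi.single i (u i)) from
    map_sum (AddMonoidHom.mk' H hadd) _ _]
  funext p
  simp [hsingle, cycH, Finset.sum_apply, Pi.single_apply]

section Generator

variable {F K : Type*} [Field F] [Field K] [Algebra F K] {n : ℕ} (σ : K ≃ₐ[F] K) (a : K)

lemma cycMul_single_castSucc_single_one (i : Fin (n + 1)) (x y : K) :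
    cycMul (n + 2) σ a (Pi.single i.castSucc x) (Pi.single 1 y) =
      Pi.single i.succ (x * (σ ^ (i : ℕ)) y) := by
  rw [cycMul_single_single_of_lt σ a (by simp; omega)]
  rfl

lemma cycMul_single_last_single_one (x y : K) :
    cycMul (n + 2) σ a (Pi.single (Fin.last (n + 1)) x) (Pi.single 1 y) =
      Pi.single 0 (x * (σ ^ (n + 1)) y * a) := by
  rw [cycMul_single_single_of_le σ a (by simp)]
  simp

lemma cycMul_single_one_single_zero (x y : K) :
    cycMul (n + 2) σ a (Pi.single 1 x) (Pi.single 0 y) = Pi.single 1 (x * σ y) := by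
  rw [cycMul_single_single_of_lt σ a (by simp)]
  simp

lemma eq_single_zero_of_cycMul_assoc (hσa : σ a ≠ a) (w : Fin (n + 2) → K)
    (h : cycMul (n + 2) σ a (cycMul (n + 2) σ a w (Pi.single (Fin.last (n + 1)) 1))
        (Pi.single 1 1) =
      cycMul (n + 2) σ a w
        (cycMul (n + 2) σ a (Pi.single (Fin.last (n + 1)) 1) (Pi.single 1 1))) :
    w = Pi.single 0 (w 0) := by
  funext p
  induction p using Fin.cases with
  | zero => simp
  | succ i =>
    have lhs : cycMul (n + 2) σ a (cycMul (n + 2) σ a w (Pi.single (Fin.last (n + 1)) 1))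
        (Pi.single 1 1) i.succ = w i.succ * (σ ^ (i : ℕ)) a := by
      rw [cycMul_single_apply_of_le σ a _ 1 (p := i.succ) (j := 1) (by simp),
        cycMul_single_apply_of_lt σ a _ 1 (by simp; omega)]
      simpa using Or.inl (congr_arg w (Fin.ext (by simp; omega)))
    have rhs : cycMul (n + 2) σ a w
        (cycMul (n + 2) σ a (Pi.single (Fin.last (n + 1)) 1) (Pi.single 1 1)) i.succ =
          w i.succ * (σ ^ ((i : ℕ) + 1)) a := by
      rw [cycMul_single_last_single_one, cycMul_single_apply_of_le σ a _ _ (by simp)]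
      simpa using Or.inl (congr_arg w (Fin.ext (by simp)))
    have hw := lhs.symm.trans ((congrFun h i.succ).trans rhs)
    by_contra hne
    rw [Pi.single_eq_of_ne (Fin.succ_ne_zero i)] at hne
    rw [pow_succ, AlgEquiv.mul_apply] at hw
    exact hσa ((σ ^ (i : ℕ)).injective (mul_left_cancel₀ hne hw).symm)

lemma eq_single_one_of_cycMul_single_zero (hord : orderOf σ = n + 2) (j : ℕ)
    (u : Fin (n + 2) → K)
    (h : ∀ x, cycMul (n + 2) σ a u (Pi.single 0 ((σ ^ j) x)) = (σ ^ j) (σ x) • u) :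
    u = Pi.single 1 (u 1) := by
  funext p
  by_cases hp : p = 1
  · simp [hp]
  rw [Pi.single_eq_of_ne hp]
  by_contra hne
  have hpow : σ ^ (p : ℕ) = σ ^ 1 := by
    ext x
    have hx := congrFun (h x) p
    rw [cycMul_single_apply_of_le σ a _ _ (Nat.zero_le _)] at hx
    simp only [Pi.smul_apply, smul_eq_mul] at hx
    rw [mul_comm ((σ ^ j) (σ x)), ← AlgEquiv.mul_apply, pow_mul_comm, AlgEquiv.mul_apply] at hx
    simpa using (σ ^ j).injective (mul_left_cancel₀ hne hx)
  have := pow_injOn_Iio_orderOf (by simp [hord]) (by simp [hord]) hpow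
  exact hp (Fin.ext (by simpa using this))

end Generator

section Automorphism

variable {F K : Type*} [Field F] [Field K] [Algebra F K] {n : ℕ} {σ : K ≃ₐ[F] K} {a : K}
  {H : (Fin (n + 2) → K) → (Fin (n + 2) → K)}

lemma map_single_zero_eq_single (hσa : σ a ≠ a) (hsurj : Function.Surjective H)
    (hmul : ∀ u v, H (cycMul (n + 2) σ a u v) = cycMul (n + 2) σ a (H u) (H v)) (x : K) :
    H (Pi.single 0 x) = Pi.single 0 (H (Pi.single 0 x) 0) := by
  apply eq_single_zero_of_cycMul_assoc σ a hσa
  obtain ⟨u, hu⟩ := hsurj (Pi.single (Fin.last (n + 1)) 1)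
  obtain ⟨v, hv⟩ := hsurj (Pi.single 1 1)
  rw [← hu, ← hv, ← hmul, ← hmul, ← hmul, ← hmul, cycMul_single_zero_assoc]

lemma exists_algEquiv_map_single_zero [FiniteDimensional F K] (hσa : σ a ≠ a)
    (hH : IsCycAut (n + 2) σ a H) :
    ∃ φ : K ≃ₐ[F] K, ∀ x, H (Pi.single 0 x) = Pi.single 0 (φ x) := by
  obtain ⟨hbij, hadd, hsmul, hone, hmul⟩ := hH
  set f : K → K := fun x => H (Pi.single 0 x) 0
  have hf : ∀ x, H (Pi.single 0 x) = Pi.single 0 (f x) :=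
    map_single_zero_eq_single hσa hbij.2 hmul
  have hf_one : f 1 = 1 := by
    simp only [f, ← cycOne_eq_single, hone, cycOne, Fin.val_zero, if_true]
  have hf_add : ∀ x y, f (x + y) = f x + f y := fun x y => by
    have h := hadd (Pi.single 0 x) (Pi.single 0 y)
    rw [← Pi.single_add, hf, hf, hf, ← Pi.single_add] at h
    exact Pi.single_injective _ h
  have hf_mul : ∀ x y, f (x * y) = f x * f y := fun x y => by
    have h := hmul (Pi.single 0 x) (Pi.single 0 y)
    rw [cycMul_single_zero_single, hf, hf, hf, cycMul_single_zero_single] at h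
    exact Pi.single_injective _ h
  have hf_zero : f 0 = 0 := by simpa using hf_add 0 0
  have hf_commutes : ∀ c : F, f (algebraMap F K c) = algebraMap F K c := fun c => by
    have h := hsmul c (Pi.single 0 1)
    rw [← Pi.single_smul', hf, hf, hf_one, ← Pi.single_smul',
      ← Algebra.algebraMap_eq_smul_one] at h
    exact Pi.single_injective _ h
  let φ : K →ₐ[F] K :=
    { toFun := f, map_one' := hf_one, map_mul' := hf_mul, map_zero' := hf_zero,
      map_add' := hf_add, commutes' := hf_commutes }
  exact ⟨AlgEquiv.ofBijective φ φ.bijective, hf⟩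

lemma exists_map_single_one (hord : orderOf σ = n + 2) (hinj : Function.Injective H)
    (hzero : H 0 = 0)
    (hmul : ∀ u v, H (cycMul (n + 2) σ a u v) = cycMul (n + 2) σ a (H u) (H v)) {j : ℕ}
    (hj : ∀ x, H (Pi.single 0 x) = Pi.single 0 ((σ ^ j) x)) :
    ∃ k ≠ 0, H (Pi.single 1 1) = Pi.single 1 k := by
  have ht : H (Pi.single 1 1) = Pi.single 1 (H (Pi.single 1 1) 1) := by
    refine eq_single_one_of_cycMul_single_zero σ a hord j _ fun x => ?_
    have h := hmul (Pi.single 0 (σ x)) (Pi.single 1 1)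
    rw [cycMul_single_zero_single, mul_one, hj, cycMul_single_zero_left] at h
    rw [← hj, ← hmul, cycMul_single_one_single_zero, one_mul, h]
  refine ⟨_, fun hk => ?_, ht⟩
  rw [hk, Pi.single_zero, ← hzero] at ht
  simpa using congrFun (hinj ht) 1

lemma map_single_one_eq_prod
    (hmul : ∀ u v, H (cycMul (n + 2) σ a u v) = cycMul (n + 2) σ a (H u) (H v))
    (hone : H (cycOne K (n + 2)) = cycOne K (n + 2)) {k : K}
    (hk : H (Pi.single 1 1) = Pi.single 1 k) (i : Fin (n + 2)) :
    H (Pi.single i 1) = Pi.single i (∏ l ∈ range i, (σ ^ l) k) := by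
  induction i using Fin.induction with
  | zero => simpa [← cycOne_eq_single] using hone
  | succ i ih =>
    have h := hmul (Pi.single i.castSucc 1) (Pi.single 1 1)
    rw [cycMul_single_castSucc_single_one, ih, hk, cycMul_single_castSucc_single_one,
      map_one, one_mul] at h
    rw [h, Fin.val_succ, prod_range_succ]
    rfl

lemma map_single_eq {j : ℕ} {k : K}
    (hmul : ∀ u v, H (cycMul (n + 2) σ a u v) = cycMul (n + 2) σ a (H u) (H v))
    (hj : ∀ x, H (Pi.single 0 x) = Pi.single 0 ((σ ^ j) x))
    (hpow : ∀ i, H (Pi.single i 1) = Pi.single i (∏ l ∈ range i, (σ ^ l) k))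
    (i : Fin (n + 2)) (x : K) :
    H (Pi.single i x) = Pi.single i ((σ ^ j) x * ∏ l ∈ range i, (σ ^ l) k) := by
  have h := hmul (Pi.single 0 x) (Pi.single i 1)
  rwa [cycMul_single_zero_single, mul_one, hj, hpow, cycMul_single_zero_single] at h

lemma apply_eq_cycNorm_mul {j : ℕ} {k : K}
    (hmul : ∀ u v, H (cycMul (n + 2) σ a u v) = cycMul (n + 2) σ a (H u) (H v))
    (hj : ∀ x, H (Pi.single 0 x) = Pi.single 0 ((σ ^ j) x))
    (hpow : ∀ i, H (Pi.single i 1) = Pi.single i (∏ l ∈ range i, (σ ^ l) k)) :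
    (σ ^ j) a = cycNorm (n + 2) σ k * a := by
  have h := hmul (Pi.single (Fin.last (n + 1)) 1) (Pi.single 1 1)
  rw [cycMul_single_last_single_one, hpow, hpow, cycMul_single_last_single_one, map_one,
    mul_one, one_mul, hj] at h
  rw [Pi.single_injective _ h, cycNorm, prod_range_succ]
  simp

end Automorphism

section CycH

variable {F K : Type*} [Field F] [Field K] [Algebra F K] {m : ℕ} (σ τ : K ≃ₐ[F] K)

lemma prod_range_add_apply (k : K) (i j : ℕ) :
    ∏ l ∈ range (i + j), (σ ^ l) k =
      (∏ l ∈ range i, (σ ^ l) k) * (σ ^ i) (∏ l ∈ range j, (σ ^ l) k) := by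
  simp only [prod_range_add, map_prod, ← AlgEquiv.mul_apply, ← pow_add]

lemma cycH_bijective {k : K} (hk : k ≠ 0) : Function.Bijective (cycH m σ τ k) := by
  refine Function.Bijective.piMap (f := fun (i : Fin m) x => τ x * ∏ l ∈ range i, (σ ^ l) k)
    fun i => (mulRight_bijective₀ _ ?_).comp τ.bijective
  exact prod_ne_zero_iff.mpr fun l _ => (map_ne_zero_iff _ (σ ^ l).injective).mpr hk

lemma cycH_cycMul (hτ : Commute σ τ) {a k : K} (ha : τ a = cycNorm m σ k * a)
    (u v : Fin m → K) :
    cycH m σ τ k (cycMul m σ a u v) = cycMul m σ a (cycH m σ τ k u) (cycH m σ τ k v) := by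
  have hcomm : ∀ (i : ℕ) (x : K), τ ((σ ^ i) x) = (σ ^ i) (τ x) := fun i x =>
    (DFunLike.congr_fun ((hτ.pow_left i).eq) x).symm
  funext p
  simp only [cycMul, cycH, map_add, map_sum, add_mul, sum_mul]
  congr 1 <;> refine sum_congr rfl fun i _ => sum_congr rfl fun j _ => ?_ <;>
    split_ifs with h
  · rw [map_mul, map_mul (σ ^ (i : ℕ)), hcomm, ← h, prod_range_add_apply]
    ring
  · simp
  · have hμ : (∏ l ∈ range i, (σ ^ l) k) * (σ ^ (i : ℕ)) (∏ l ∈ range j, (σ ^ l) k) =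
        (∏ l ∈ range p, (σ ^ l) k) * (σ ^ (p : ℕ)) (cycNorm m σ k) := by
      rw [← prod_range_add_apply, h, prod_range_add_apply]
      rfl
    rw [map_mul, map_mul, map_mul (σ ^ (i : ℕ)), hcomm, hcomm, ha, map_mul]
    linear_combination (-(τ (u i) * (σ ^ (i : ℕ)) (τ (v j)) * (σ ^ (p : ℕ)) a)) * hμ
  · simp

lemma isCycAut_cycH {k : K} (hk : k ≠ 0) (hτ : Commute σ τ) {a : K}
    (ha : τ a = cycNorm m σ k * a) :
    IsCycAut m σ a (cycH m σ τ k) := by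
  refine ⟨cycH_bijective σ τ hk, fun u v => ?_, fun c u => ?_, ?_, cycH_cycMul σ τ hτ ha⟩
  · funext i
    simp [cycH, add_mul]
  · funext i
    simp [cycH]
  · funext i
    by_cases hi : (i : ℕ) = 0 <;> simp [cycH, cycOne, hi]

end CycH

lemma apply_ne_self_of_forall_mem_zpowers {F K : Type*} [Field F] [Field K] [Algebra F K]
    [IsGalois F K] [FiniteDimensional F K] {σ : K ≃ₐ[F] K}
    (hgen : ∀ τ : K ≃ₐ[F] K, τ ∈ Subgroup.zpowers σ) {a : K}
    (ha : a ∉ Set.range (algebraMap F K)) : σ a ≠ a := by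
  intro h
  refine ha ((IsGalois.mem_range_algebraMap_iff_fixed a).mpr fun τ => ?_)
  have hσ : σ ∈ MulAction.stabilizer (K ≃ₐ[F] K) a := h
  exact Subgroup.zpowers_le.mpr hσ (hgen τ)

/-- A map `H : A → A` is an `F`-automorphism of the nonassociative cyclic
algebra `A = (K/F,σ,a)` (with `a ∈ K∖F`) if and only if there exist `j ∈ {0,…,m−1}` and
`k ∈ K^×` with `σ^j(a) = N_{K/F}(k)·a` such that `H = H_{σ^j,k}`. -/
theorem stmt0 {F K : Type*} [Field F] [Field K] [Algebra F K]
    (m : ℕ) (hm : 2 ≤ m) [IsGalois F K] [FiniteDimensional F K]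
    (hrank : Module.finrank F K = m)
    (σ : K ≃ₐ[F] K) (hgen : ∀ τ : K ≃ₐ[F] K, τ ∈ Subgroup.zpowers σ)
    (a : K) (ha : a ∉ Set.range (algebraMap F K))
    (H : (Fin m → K) → (Fin m → K)) :
    IsCycAut m σ a H ↔
      ∃ j < m, ∃ k : K, k ≠ 0 ∧ (σ ^ j) a = cycNorm m σ k * a ∧
        H = cycH m σ (σ ^ j) k := by
  obtain ⟨n, rfl⟩ : ∃ n, m = n + 2 := ⟨m - 2, by omega⟩
  have hord : orderOf σ = n + 2 := by
    rw [orderOf_eq_card_of_forall_mem_zpowers hgen, IsGalois.card_aut_eq_finrank, hrank]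
  constructor
  · intro hH
    obtain ⟨φ, hφ⟩ :=
      exists_algEquiv_map_single_zero (apply_ne_self_of_forall_mem_zpowers hgen ha) hH
    classical
    obtain ⟨j, hjm, rfl⟩ : ∃ j < n + 2, σ ^ j = φ := by
      simpa [hord] using mem_zpowers_iff_mem_range_orderOf.mp (hgen φ)
    obtain ⟨hbij, hadd, -, hone, hmul⟩ := hH
    obtain ⟨k, hk, ht⟩ :=
      exists_map_single_one hord hbij.1 (map_zero (AddMonoidHom.mk' H hadd)) hmul hφ
    have hpow := map_single_one_eq_prod hmul hone ht
    exact ⟨j, hjm, k, hk, apply_eq_cycNorm_mul hmul hφ hpow,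
      eq_cycH_of_map_single σ _ k hadd (map_single_eq hmul hφ hpow)⟩
  · rintro ⟨j, -, k, hk, hja, rfl⟩
    exact isCycAut_cycH σ (σ ^ j) hk ((Commute.refl σ).pow_right j) hja
end

section
/- Let a ∈ K∖F and A = (K/F,σ,a) be the nonassociative quaternion algebra. Then the inner F-automorphisms of A are exactly the maps G_c for c ∈ K^×; that is, an F-automorphism H of A is inner if and only if there exists c ∈ K^× with H(x,y) = (x, y c^{−1}σ(c)) for all (x,y) ∈ A. -/
open Finset

section

variable {F K : Type*} [Field F] [Field K] [Algebra F K]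

/-- Multiplication of the nonassociative quaternion algebra `(K/F, σ, a)` on `K × K`:
`(x,y) ∘ (u,v) = (xu + yσ(v)a, xv + yσ(u))`. -/
def qMul (σ : K ≃ₐ[F] K) (a : K) (p r : K × K) : K × K :=
  (p.1 * r.1 + p.2 * σ r.2 * a, p.1 * r.2 + p.2 * σ r.1)

/-- `H` is an `F`-automorphism of the nonassociative quaternion algebra `(K/F, σ, a)`. -/
def IsQuatAut (σ : K ≃ₐ[F] K) (a : K) (H : K × K → K × K) : Prop :=
  Function.Bijective H ∧
    (∀ u v, H (u + v) = H u + H v) ∧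
    (∀ (c : F) (u : K × K), H (c • u) = c • H u) ∧
    H (1, 0) = (1, 0) ∧
    ∀ u v, H (qMul σ a u v) = qMul σ a (H u) (H v)

/-- `H` is an inner `F`-automorphism of `(K/F, σ, a)`:
`H(z) = (w_l ∘ z) ∘ w` for some `w ≠ 0` with left inverse `w_l`. -/
def IsQuatInner (σ : K ≃ₐ[F] K) (a : K) (H : K × K → K × K) : Prop :=
  ∃ w wl : K × K, w ≠ 0 ∧ qMul σ a wl w = (1, 0) ∧
    ∀ z, H z = qMul σ a (qMul σ a wl z) w

end

/-!
The map `G_c` is `z ↦ ((c⁻¹, 0) ∘ z) ∘ (c, 0)`, and it is multiplicative because `c⁻¹ σ(c)`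
has norm one. Conversely, an automorphism `H` preserves the left nucleus; `K × 0` lies in it,
while `(u, v)` with `v ≠ 0` does not associate with `j = (0, 1), j` because `σ a ≠ a`.
So `H` maps `K × 0` into itself. If `H(z) = (w_l ∘ z) ∘ w` with `w = (c, d)`, `w_l = (p, q)`,
the second coordinate of `H (x, 0)` is `p d x + q σ(c) σ(x)`, hence `p d = q σ(c) = 0`.
For `d = 0` this gives `H = G_c`; for `d ≠ 0` it gives `w = (0, d)`, `w_l = (0, q)`, and then
`H(j) ∘ H(j) = (a, 0)` while `H(j ∘ j) = H (a, 0) = (σ a, 0)`.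
-/

open Module

section Quadratic

variable {F K : Type*} [Field F] [Field K] [Algebra F K]

theorem involutive_of_finrank_eq_two (hrank : finrank F K = 2) (σ : K ≃ₐ[F] K) :
    Function.Involutive σ := by
  have : FiniteDimensional F K := .of_finrank_eq_succ hrank
  have hcard : Nat.card (K ≃ₐ[F] K) ≤ 2 := by
    rw [Nat.card_eq_fintype_card, ← hrank]; exact AlgEquiv.card_le
  have hσ2 : σ * σ = 1 := by
    rw [← pow_two]
    interval_cases h : Nat.card (K ≃ₐ[F] K)
    · exact absurd h Nat.card_pos.ne'
    · have := Finite.card_le_one_iff_subsingleton.mp h.le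
      exact Subsingleton.elim _ _
    · exact h ▸ pow_card_eq_one'
  exact fun x => congrArg (· x) hσ2

theorem apply_ne_self_of_ne_refl (hrank : finrank F K = 2) {a : K}
    (ha : a ∉ Set.range (algebraMap F K)) {σ : K ≃ₐ[F] K} (hσ : σ ≠ AlgEquiv.refl) :
    σ a ≠ a := by
  have := Subalgebra.isSimpleOrder_of_finrank hrank
  have htop : Algebra.adjoin F {a} = ⊤ := by
    refine (eq_bot_or_eq_top _).resolve_left fun hbot => ha ?_
    rw [← Algebra.mem_bot, ← hbot]
    exact Algebra.subset_adjoin rfl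
  intro hfix
  apply hσ
  exact AlgEquiv.coe_toAlgHom_injective
    (AlgHom.ext_of_adjoin_eq_top htop (by simpa using hfix))

end Quadratic

section Quaternion

variable {F K : Type*} [Field F] [Field K] [Algebra F K] {σ : K ≃ₐ[F] K} {a : K}

def quatG (σ : K ≃ₐ[F] K) (c : K) (p : K × K) : K × K :=
  (p.1, p.2 * (c⁻¹ * σ c))

theorem isQuatInner_quatG {c : K} (hc : c ≠ 0) : IsQuatInner σ a (quatG σ c) := by
  refine ⟨(c, 0), (c⁻¹, 0), by simp [hc], by simp [qMul, hc], fun z => ?_⟩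
  simp only [quatG, qMul, map_zero, mul_zero, zero_mul, add_zero, zero_add, Prod.mk.injEq]
  constructor <;> field_simp

theorem isQuatAut_quatG (hσ : Function.Involutive σ) {c : K} (hc : c ≠ 0) :
    IsQuatAut σ a (quatG σ c) := by
  have hσc : σ c ≠ 0 := by simpa using hc
  refine ⟨⟨fun u v huv => ?_, fun u => ⟨quatG σ (σ c) u, ?_⟩⟩, fun u v => ?_, fun r u => ?_,
    by simp [quatG], fun u v => ?_⟩
  · simp only [quatG, Prod.mk.injEq] at huv
    exact Prod.ext huv.1 (mul_right_cancel₀ (by simp [hc, hσc]) huv.2)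
  · simp only [quatG, hσ c]
    ext <;> field_simp
  · simp [quatG, add_mul]
  · simp [quatG]
  · simp only [quatG, qMul, map_mul, map_inv₀, hσ c, Prod.mk.injEq]
    refine ⟨?_, by ring⟩
    field_simp

theorem qMul_mk_zero_assoc (x : K) (u v : K × K) :
    qMul σ a (qMul σ a (x, 0) u) v = qMul σ a (x, 0) (qMul σ a u v) := by
  simp only [qMul, zero_mul, add_zero]
  ext <;> ring

theorem snd_eq_zero_of_qMul_assoc_j (hσa : σ a ≠ a) {u : K × K}
    (h : qMul σ a (qMul σ a u (0, 1)) (0, 1) = qMul σ a u (qMul σ a (0, 1) (0, 1))) :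
    u.2 = 0 := by
  have h2 := congrArg Prod.snd h
  simp only [qMul, map_zero, map_one, mul_zero, zero_mul, mul_one, one_mul, add_zero,
    zero_add] at h2
  exact (mul_eq_zero.mp (by linear_combination h2 : u.2 * (a - σ a) = 0)).resolve_right
    (sub_ne_zero.mpr hσa.symm)

theorem IsQuatAut.snd_apply_mk_zero {H : K × K → K × K} (hH : IsQuatAut σ a H)
    (hσa : σ a ≠ a) (x : K) : (H (x, 0)).2 = 0 := by
  obtain ⟨⟨-, hsurj⟩, -, -, -, hmul⟩ := hH
  obtain ⟨j, hj⟩ := hsurj (0, 1)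
  apply snd_eq_zero_of_qMul_assoc_j hσa
  rw [← hj, ← hmul, ← hmul, ← hmul, ← hmul, qMul_mk_zero_assoc]

theorem eq_zero_of_forall_mul_add_mul_apply_eq_zero (hσa : σ a ≠ a) {α β : K}
    (h : ∀ x, α * x + β * σ x = 0) : α = 0 ∧ β = 0 := by
  have h1 := h 1
  have ha := h a
  rw [map_one] at h1
  have hβ : β = 0 :=
    (mul_eq_zero.mp (by linear_combination ha - a * h1 : β * (σ a - a) = 0)).resolve_right
      (sub_ne_zero.mpr hσa)
  exact ⟨by linear_combination h1 - hβ, hβ⟩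

theorem IsQuatInner.exists_eq_quatG (hσ : Function.Involutive σ) (hσa : σ a ≠ a)
    {H : K × K → K × K} (hH : IsQuatAut σ a H) (hinner : IsQuatInner σ a H) :
    ∃ c, c ≠ 0 ∧ H = quatG σ c := by
  obtain ⟨⟨c, d⟩, ⟨p, q⟩, hw, hinv, hHz⟩ := hinner
  simp only [qMul, Prod.mk.injEq] at hinv hHz
  obtain ⟨hpd, hqc⟩ : p * d = 0 ∧ q * σ c = 0 := by
    refine eq_zero_of_forall_mul_add_mul_apply_eq_zero hσa fun x => ?_
    have := hH.snd_apply_mk_zero hσa x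
    rw [hHz] at this
    simp only [map_zero, mul_zero, add_zero, zero_mul] at this
    linear_combination this
  by_cases hd : d = 0
  · subst hd
    have hc : c ≠ 0 := by rintro rfl; exact hw rfl
    have hq : q = 0 := by simpa [hc] using hqc
    subst hq
    have hpc : p = c⁻¹ := eq_inv_of_mul_eq_one_left (by simpa using hinv.1)
    refine ⟨c, hc, funext fun z => ?_⟩
    simp only [hHz, quatG, hpc, map_zero, mul_zero, zero_mul, add_zero, zero_add, Prod.mk.injEq]
    constructor <;> field_simp
  · exfalso
    have hp : p = 0 := by simpa [hd] using hpd
    subst hp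
    have hqda : q * σ d * a = 1 := by simpa using hinv.1
    have hσqda : σ q * d * σ a = 1 := by simpa [hσ d] using congrArg σ hqda
    have hq : q ≠ 0 := by rintro rfl; simp at hqda
    have hc : c = 0 := by simpa [hq] using hqc
    subst hc
    have hmul := congrArg Prod.fst (hH.2.2.2.2 (0, 1) (0, 1))
    simp only [hHz, qMul, map_zero, map_one, map_mul, mul_zero, zero_mul, mul_one,
      one_mul, add_zero, zero_add] at hmul
    exact hσa (by linear_combination hmul - σ a * hqda + (σ q * d * σ a * a) * hqda + a * hσqda)

end Quaternion

theorem stmt5_general {F K : Type*} [Field F] [Field K] [Algebra F K]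
    (hrank : Module.finrank F K = 2)
    (σ : K ≃ₐ[F] K) (hσ : σ ≠ AlgEquiv.refl)
    (a : K) (ha : a ∉ Set.range (algebraMap F K)) :
    -- each `G_c` is an inner `F`-automorphism of `A`
    (∀ c : K, c ≠ 0 →
      IsQuatAut σ a (fun p : K × K => (p.1, p.2 * (c⁻¹ * σ c))) ∧
        IsQuatInner σ a (fun p : K × K => (p.1, p.2 * (c⁻¹ * σ c)))) ∧
    -- and conversely an `F`-automorphism is inner iff it is some `G_c`
    (∀ H : K × K → K × K, IsQuatAut σ a H →
      (IsQuatInner σ a H ↔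
        ∃ c : K, c ≠ 0 ∧ H = fun p : K × K => (p.1, p.2 * (c⁻¹ * σ c)))) := by
  have hinv := involutive_of_finrank_eq_two hrank σ
  have hσa := apply_ne_self_of_ne_refl hrank ha hσ
  refine ⟨fun c hc => ⟨isQuatAut_quatG hinv hc, isQuatInner_quatG hc⟩, fun H hH => ⟨?_, ?_⟩⟩
  · exact fun hinner => hinner.exists_eq_quatG hinv hσa hH
  · rintro ⟨c, hc, rfl⟩
    exact isQuatInner_quatG hc

/-- Let `a ∈ K∖F` and `A = (K/F,σ,a)` be a nonassociative quaternion
algebra (`char F ≠ 2`, `K/F` quadratic separable with nontrivial automorphism `σ`). Then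
the inner `F`-automorphisms of `A` are exactly the maps `G_c : (x,y) ↦ (x, y c⁻¹σ(c))`
for `c ∈ K^×`. -/
theorem stmt5 {F K : Type*} [Field F] [Field K] [Algebra F K]
    (hchar : ringChar F ≠ 2) [FiniteDimensional F K]
    (hrank : Module.finrank F K = 2) [Algebra.IsSeparable F K]
    (σ : K ≃ₐ[F] K) (hσ : σ ≠ AlgEquiv.refl)
    (a : K) (ha : a ∉ Set.range (algebraMap F K)) :
    -- each `G_c` is an inner `F`-automorphism of `A`
    (∀ c : K, c ≠ 0 →
      IsQuatAut σ a (fun p : K × K => (p.1, p.2 * (c⁻¹ * σ c))) ∧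
        IsQuatInner σ a (fun p : K × K => (p.1, p.2 * (c⁻¹ * σ c)))) ∧
    -- and conversely an `F`-automorphism is inner iff it is some `G_c`
    (∀ H : K × K → K × K, IsQuatAut σ a H →
      (IsQuatInner σ a H ↔
        ∃ c : K, c ≠ 0 ∧ H = fun p : K × K => (p.1, p.2 * (c⁻¹ * σ c)))) :=
  stmt5_general hrank σ hσ a ha
end

section
/- Let D be a division ring, σ an injective ring endomorphism of D, m ≥ 2, and a₀, a₁, …, a_{m−1} ∈ D with a₀ ≠ 0. Define L : D^m → D^m (the left multiplication by t in the algebra S_f for f(t) = t^m − Σ_{i=0}^{m−1} a_i t^i ∈ D[t;σ]) by L(z₀, …, z_{m−1}) = (σ(z_{m−1})a₀, σ(z₀) + σ(z_{m−1})a₁, σ(z₁) + σ(z_{m−1})a₂, …, σ(z_{m−2}) + σ(z_{m−1})a_{m−1}). Then for every j ∈ {1, …, m−1}, the j-th iterate L^j is surjective if and only if σ is surjective. -/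
/-- Left multiplication by `t` in the algebra `S_f`, `f(t) = t^m − Σ a_i t^i ∈ D[t;σ]`,
written as an explicit map on `D^m`:
`L(z)_0 = σ(z_{m−1}) a_0` and `L(z)_i = σ(z_{i−1}) + σ(z_{m−1}) a_i` for `i ≥ 1`. -/
def Lmap (D : Type*) [DivisionRing D] (σ : D →+* D) (m : ℕ) (hm : 0 < m)
    (a : Fin m → D) (z : Fin m → D) : Fin m → D :=
  fun i =>
    (if h : 0 < (i : ℕ) then σ (z ⟨(i : ℕ) - 1, by have := i.isLt; omega⟩) else 0) +
      σ (z ⟨m - 1, by omega⟩) * a i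

/-! The map `L` is surjective iff `σ` is: the coordinate `L(z)_0 = σ(z_{m−1}) a_0` forces
`σ` to be onto, and conversely, if `σ` is onto, `L(z) = w` is solved first for `z_{m−1}` from
`w_0`, then for each `z_i` from `w_{i+1}`, since `a_0` is invertible. An iterate `L^j` with
`j ≥ 1` is surjective exactly when `L` is. -/

theorem Function.surjective_iterate_iff {α : Type*} {f : α → α} {n : ℕ} (hn : n ≠ 0) :
    Function.Surjective f^[n] ↔ Function.Surjective f := by
  refine ⟨fun h => ?_, fun h => h.iterate n⟩
  obtain ⟨k, rfl⟩ := Nat.exists_eq_succ_of_ne_zero hn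
  rw [Function.iterate_succ'] at h
  exact h.of_comp

section Lmap

variable {D : Type*} [DivisionRing D] (σ : D →+* D) {n : ℕ} (hm : 0 < n + 1)
  (a z : Fin (n + 1) → D)

theorem Lmap_apply_zero : Lmap D σ (n + 1) hm a z 0 = σ (z (Fin.last n)) * a 0 := by
  simp [Lmap, Fin.last]

theorem Lmap_apply_succ (k : Fin n) :
    Lmap D σ (n + 1) hm a z k.succ = σ (z k.castSucc) + σ (z (Fin.last n)) * a k.succ := by
  simp [Lmap, Fin.last, Fin.castSucc, Fin.castAdd, Fin.castLE]

variable {σ a}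

theorem surjective_of_surjective_Lmap (ha0 : a 0 ≠ 0)
    (hL : Function.Surjective (Lmap D σ (n + 1) hm a)) : Function.Surjective σ := by
  intro c
  obtain ⟨z, hz⟩ := hL fun _ => c * a 0
  refine ⟨z (Fin.last n), mul_right_cancel₀ ha0 ?_⟩
  rw [← Lmap_apply_zero σ hm a z, hz]

theorem surjective_Lmap (ha0 : a 0 ≠ 0) (hσ : Function.Surjective σ) :
    Function.Surjective (Lmap D σ (n + 1) hm a) := by
  intro w
  let τ := Function.surjInv hσ
  have hστ : ∀ x, σ (τ x) = x := Function.surjInv_eq hσ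
  set c := τ (w 0 * (a 0)⁻¹)
  refine ⟨Fin.snoc (fun k => τ (w k.succ - σ c * a k.succ)) c, funext fun i => ?_⟩
  cases i using Fin.cases with
  | zero => simp [Lmap_apply_zero, hστ, c, mul_assoc, inv_mul_cancel₀ ha0]
  | succ k => simp [Lmap_apply_succ, hστ]

end Lmap

theorem Lmap_surjective_iff {D : Type*} [DivisionRing D] (σ : D →+* D) {m : ℕ} (hm : 0 < m)
    (a : Fin m → D) (ha0 : a ⟨0, hm⟩ ≠ 0) :
    Function.Surjective (Lmap D σ m hm a) ↔ Function.Surjective σ := by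
  obtain ⟨n, rfl⟩ := Nat.exists_eq_add_one_of_ne_zero hm.ne'
  exact ⟨surjective_of_surjective_Lmap hm ha0, surjective_Lmap hm ha0⟩

/-- Let `D` be a division ring, `σ` an injective ring endomorphism of
`D`, `m ≥ 2`, and `a₀, …, a_{m−1} ∈ D` with `a₀ ≠ 0`. Then for every `j ∈ {1,…,m−1}`,
the `j`-th iterate of the left-multiplication-by-`t` map `L` on `D^m` is surjective if
and only if `σ` is surjective. -/
theorem stmt13 (D : Type*) [DivisionRing D] (σ : D →+* D)
    (m : ℕ) (hm : 2 ≤ m) (a : Fin m → D) (ha0 : a ⟨0, by omega⟩ ≠ 0) :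
    ∀ j : ℕ, 1 ≤ j → j ≤ m - 1 →
      (Function.Surjective ((Lmap D σ m (by omega) a)^[j]) ↔ Function.Surjective σ) := by
  intro j hj _
  rw [Function.surjective_iterate_iff (by omega)]
  exact Lmap_surjective_iff σ _ a ha0
end

section
/- Let k₀ be a field, K = k₀(y) the field of rational functions, and σ : K → K the injective k₀-algebra endomorphism determined by σ(y) = y² (σ is not surjective). Let a ∈ k₀[y] be a nonzero polynomial whose degree in y is not divisible by 3. Define a multiplication on A = K × K by (x,z) ∘ (u,v) = (xu + zσ(v)a, xv + zσ(u)). Then: (i) σ(b)·b ≠ a for every b ∈ K; (ii) for every nonzero w ∈ A, the right multiplication map z ↦ z ∘ w is bijective; (iii) the left multiplication map z ↦ (0,1) ∘ z is not surjective. In particular A is a right division algebra but not a left division algebra. -/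
/-!
If `σ` fixes `k₀` and sends `y` to `yⁿ`, it multiplies the degree `deg num − deg denom` of a
rational function by `n`. For `n = 2` the product `σ(b)·b` has degree `3·deg b`, so it never
equals `a`, and `y` (of degree `1`) is not in the image of `σ`.

Right multiplication by `w = (u, v)` is `K`-linear in the left factor with determinant
`u·σ(u) − v·σ(v)·a`; for `v ≠ 0` its vanishing would give `σ(u/v)·(u/v) = a`. The second
coordinate of `(0, 1) ∘ z` is `σ(z.1)`, so left multiplication by `(0, 1)` misses `(0, y)`.
-/

/-- Multiplication of the algebra `S_f` for `f(t) = t² − A ∈ K[t;σ]`, `K = k₀(y)`, on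
`K × K`: `(x,z) ∘ (u,v) = (xu + zσ(v)A, xv + zσ(u))`. -/
noncomputable def rfMul (k₀ : Type*) [Field k₀] (σ : RatFunc k₀ →+* RatFunc k₀) (A : RatFunc k₀)
    (p r : RatFunc k₀ × RatFunc k₀) : RatFunc k₀ × RatFunc k₀ :=
  (p.1 * r.1 + p.2 * σ r.2 * A, p.1 * r.2 + p.2 * σ r.1)

namespace RatFunc

variable {k₀ : Type*} [Field k₀] {σ : RatFunc k₀ →+* RatFunc k₀} {n : ℕ}

theorem map_algebraMap_of_map_X_eq_pow (hσC : ∀ c : k₀, σ (C c) = C c)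
    (hσX : σ X = X ^ n) (p : Polynomial k₀) :
    σ (algebraMap _ _ p) = algebraMap _ (RatFunc k₀) (p.comp (Polynomial.X ^ n)) := by
  induction p using Polynomial.induction_on with
  | C c => simp [algebraMap_C, hσC]
  | add p q hp hq => simp [hp, hq, Polynomial.add_comp]
  | monomial k c _ =>
    simp only [map_mul, map_pow, algebraMap_C, algebraMap_X, hσC, hσX, Polynomial.mul_comp,
      Polynomial.C_comp, Polynomial.X_comp, Polynomial.pow_comp, ← pow_mul]

theorem intDegree_map_of_map_X_eq_pow (hσC : ∀ c : k₀, σ (C c) = C c)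
    (hσX : σ X = X ^ n) (b : RatFunc k₀) : (σ b).intDegree = n * b.intDegree := by
  rcases eq_or_ne b 0 with rfl | hb
  · simp
  have hσ_ne_zero {p : Polynomial k₀} (hp : p ≠ 0) :
      algebraMap _ (RatFunc k₀) (p.comp (Polynomial.X ^ n)) ≠ 0 := by
    rw [← map_algebraMap_of_map_X_eq_pow hσC hσX, map_ne_zero]
    exact algebraMap_ne_zero hp
  conv_lhs => rw [← b.num_div_denom]
  rw [map_div₀, map_algebraMap_of_map_X_eq_pow hσC hσX, map_algebraMap_of_map_X_eq_pow hσC hσX,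
    intDegree_div (hσ_ne_zero (num_ne_zero hb)) (hσ_ne_zero b.denom_ne_zero),
    intDegree_polynomial, intDegree_polynomial, Polynomial.natDegree_comp,
    Polynomial.natDegree_comp, Polynomial.natDegree_X_pow, intDegree]
  push_cast
  ring

theorem intDegree_map_mul_self_of_map_X_eq_pow (hσC : ∀ c : k₀, σ (C c) = C c)
    (hσX : σ X = X ^ n) (b : RatFunc k₀) : (σ b * b).intDegree = (n + 1) * b.intDegree := by
  rcases eq_or_ne b 0 with rfl | hb
  · simp
  rw [intDegree_mul ((map_ne_zero σ).2 hb) hb, intDegree_map_of_map_X_eq_pow hσC hσX]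
  ring

theorem map_ne_X_of_map_X_eq_pow (hσC : ∀ c : k₀, σ (C c) = C c)
    (hσX : σ X = X ^ n) (hn : n ≠ 1) (b : RatFunc k₀) : σ b ≠ X := by
  intro h
  have hdeg := intDegree_map_of_map_X_eq_pow hσC hσX b
  rw [h, intDegree_X] at hdeg
  exact hn (by exact_mod_cast Int.eq_one_of_mul_eq_one_right (Int.natCast_nonneg n) hdeg.symm)

end RatFunc

section rfMul

variable {k₀ : Type*} [Field k₀] {σ : RatFunc k₀ →+* RatFunc k₀} {A : RatFunc k₀}

theorem rfMul_det_ne_zero (hA : ∀ b, σ b * b ≠ A) {u v : RatFunc k₀} (hw : (u, v) ≠ 0) :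
    u * σ u - v * σ v * A ≠ 0 := by
  intro h
  rcases eq_or_ne v 0 with rfl | hv
  · have hu : u ≠ 0 := fun hu => hw (by simp [hu])
    simp only [map_zero, mul_zero, zero_mul, sub_zero] at h
    exact mul_ne_zero hu ((map_ne_zero σ).2 hu) h
  · have hσv : σ v ≠ 0 := (map_ne_zero σ).2 hv
    apply hA (u / v)
    rw [map_div₀]
    field_simp
    linear_combination h

theorem rfMul_right_bijective (hA : ∀ b, σ b * b ≠ A) {w : RatFunc k₀ × RatFunc k₀}
    (hw : w ≠ 0) : Function.Bijective fun z => rfMul k₀ σ A z w := by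
  obtain ⟨u, v⟩ := w
  have hd := rfMul_det_ne_zero hA hw
  set d := u * σ u - v * σ v * A with hd_def
  -- Cramer's rule for `z ↦ z * !![u, v; σ v * A, σ u]`
  refine Function.bijective_iff_has_inverse.2
    ⟨fun P => ((P.1 * σ u - P.2 * σ v * A) / d, (P.2 * u - P.1 * v) / d),
      fun z => ?_, fun P => ?_⟩ <;>
  · simp only [rfMul]
    ext <;> field_simp <;> rw [hd_def] <;> ring

theorem rfMul_zero_one_not_surjective (hσ : ¬ Function.Surjective σ) :
    ¬ Function.Surjective fun z => rfMul k₀ σ A (0, 1) z := by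
  intro h
  apply hσ
  intro c
  obtain ⟨z, hz⟩ := h (0, c)
  exact ⟨z.1, by simpa [rfMul] using congrArg Prod.snd hz⟩

end rfMul

theorem stmt14_general (k₀ : Type*) [Field k₀]
    (σ : RatFunc k₀ →+* RatFunc k₀)
    (hσC : ∀ c : k₀, σ (RatFunc.C c) = RatFunc.C c)
    (hσX : σ RatFunc.X = RatFunc.X ^ 2)
    (a : Polynomial k₀) (hdeg : ¬(3 ∣ a.natDegree)) :
    (∀ b : RatFunc k₀, σ b * b ≠ algebraMap (Polynomial k₀) (RatFunc k₀) a) ∧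
    (∀ w : RatFunc k₀ × RatFunc k₀, w ≠ 0 →
      Function.Bijective fun z : RatFunc k₀ × RatFunc k₀ =>
        rfMul k₀ σ (algebraMap (Polynomial k₀) (RatFunc k₀) a) z w) ∧
    ¬ Function.Surjective fun z : RatFunc k₀ × RatFunc k₀ =>
        rfMul k₀ σ (algebraMap (Polynomial k₀) (RatFunc k₀) a) (0, 1) z := by
  have hnorm (b : RatFunc k₀) : σ b * b ≠ algebraMap (Polynomial k₀) (RatFunc k₀) a := by
    intro h
    have hdeg_eq := RatFunc.intDegree_map_mul_self_of_map_X_eq_pow hσC hσX b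
    rw [h, RatFunc.intDegree_polynomial] at hdeg_eq
    omega
  refine ⟨hnorm, fun w hw => rfMul_right_bijective hnorm hw, rfMul_zero_one_not_surjective ?_⟩
  intro hσ
  obtain ⟨b, hb⟩ := hσ RatFunc.X
  exact RatFunc.map_ne_X_of_map_X_eq_pow hσC hσX (by decide) b hb

/-- Let `K = k₀(y)` and `σ : K → K` the injective `k₀`-algebra
endomorphism with `σ(y) = y²` (not surjective). Let `a ∈ k₀[y]` be nonzero with
`3 ∤ deg_y(a)`, and let `A = S_f` for `f(t) = t² − a` with the multiplication above. Then:
(i) `σ(b)·b ≠ a` for every `b ∈ K`;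
(ii) right multiplication by every nonzero element of `A` is bijective;
(iii) left multiplication by `t = (0,1)` is not surjective.
In particular `A` is a right division algebra but not a left division algebra. -/
theorem stmt14 (k₀ : Type*) [Field k₀]
    (σ : RatFunc k₀ →+* RatFunc k₀)
    (hσC : ∀ c : k₀, σ (RatFunc.C c) = RatFunc.C c)
    (hσX : σ RatFunc.X = RatFunc.X ^ 2)
    (a : Polynomial k₀) (ha : a ≠ 0) (hdeg : ¬(3 ∣ a.natDegree)) :
    (∀ b : RatFunc k₀, σ b * b ≠ algebraMap (Polynomial k₀) (RatFunc k₀) a) ∧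
    (∀ w : RatFunc k₀ × RatFunc k₀, w ≠ 0 →
      Function.Bijective fun z : RatFunc k₀ × RatFunc k₀ =>
        rfMul k₀ σ (algebraMap (Polynomial k₀) (RatFunc k₀) a) z w) ∧
    ¬ Function.Surjective fun z : RatFunc k₀ × RatFunc k₀ =>
        rfMul k₀ σ (algebraMap (Polynomial k₀) (RatFunc k₀) a) (0, 1) z :=
  stmt14_general k₀ σ hσC hσX a hdeg
end

section
/- Let q ≥ 2 and m ≥ 2 be integers with m dividing q − 1, and set s = Σ_{i=0}^{m−1} q^i = (q^m − 1)/(q − 1). Then m divides s; and if moreover m is odd or (q−1)/m is even, then for every l ∈ {1, …, m−1}, m² does not divide l·s. -/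
open Finset

lemma aux_pow_one_add {R : Type*} [CommRing R] (x : R) (hx : x ^ 2 = 0) (i : ℕ) :
    (1 + x) ^ i = 1 + (i : R) * x := by
  induction i with
  | zero => simp
  | succ n ih =>
    rw [pow_succ, ih]
    have h : (1 + (n : R) * x) * (1 + x) = 1 + ((n : ℕ) + 1 : R) * x + (n : R) * x ^ 2 := by
      push_cast; ring
    rw [h, hx]
    push_cast
    ring

/-- Let `q ≥ 2` and `m ≥ 2` with `m ∣ q − 1`, and set
`s = Σ_{i=0}^{m−1} q^i = (q^m − 1)/(q − 1)`. Then `m ∣ s`; and if moreover `m` is odd or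
`(q−1)/m` is even, then `m²` does not divide `l·s` for any `l ∈ {1, …, m−1}`. -/
theorem stmt17 (q m : ℕ) (hq : 2 ≤ q) (hm : 2 ≤ m) (hdvd : m ∣ q - 1) :
    (m ∣ ∑ i ∈ Finset.range m, q ^ i) ∧
    ((Odd m ∨ Even ((q - 1) / m)) →
      ∀ l : ℕ, 1 ≤ l → l ≤ m - 1 →
        ¬(m ^ 2 ∣ l * ∑ i ∈ Finset.range m, q ^ i)) := by
  obtain ⟨k, hk⟩ := hdvd
  have hq1 : q = m * k + 1 := by omega
  set s := ∑ i ∈ Finset.range m, q ^ i with hs_def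
  constructor
  · have h0 : ((s : ℕ) : ZMod m) = 0 := by
      have hq' : (q : ZMod m) = 1 := by
        rw [hq1]; push_cast; simp
      rw [hs_def]
      push_cast
      simp [hq']
    exact (ZMod.natCast_eq_zero_iff _ _).mp h0
  · intro hcond l hl1 hl2 hdvd2
    have hm2 : (0:ℕ) < m ^ 2 := by positivity
    -- x := m*k, with x^2 = 0 in ZMod (m^2)
    have hx : ((m : ZMod (m ^ 2)) * (k : ZMod (m ^ 2))) ^ 2 = 0 := by
      have hmm : ((m ^ 2 : ℕ) : ZMod (m ^ 2)) = 0 := ZMod.natCast_self _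
      push_cast at hmm
      calc ((m : ZMod (m ^ 2)) * k) ^ 2 = (m : ZMod (m ^ 2)) ^ 2 * k ^ 2 := by ring
        _ = 0 := by rw [hmm]; ring
    -- key congruence: s ≡ m + T * (m*k) mod m^2, where T = Σ i
    have hs : ((s : ℕ) : ZMod (m ^ 2)) =
        (m : ZMod (m ^ 2)) + ((∑ i ∈ Finset.range m, i : ℕ) : ZMod (m ^ 2)) *
          ((m : ZMod (m ^ 2)) * k) := by
      rw [hs_def, hq1]
      push_cast
      calc ∑ i ∈ Finset.range m, ((m : ZMod (m ^ 2)) * k + 1) ^ i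
          = ∑ i ∈ Finset.range m, (1 + (i : ZMod (m ^ 2)) * ((m : ZMod (m ^ 2)) * k)) := by
            refine Finset.sum_congr rfl fun i _ => ?_
            rw [add_comm ((m : ZMod (m ^ 2)) * k) 1, aux_pow_one_add _ hx]
        _ = _ := by
            rw [Finset.sum_add_distrib, ← Finset.sum_mul]
            simp
    -- the correction term vanishes
    have hT : m ^ 2 ∣ (∑ i ∈ Finset.range m, i) * (m * k) := by
      have h2T : (∑ i ∈ Finset.range m, i) * 2 = m * (m - 1) := Finset.sum_range_id_mul_two m
      rcases hcond with ⟨t, ht⟩ | ⟨j, hj⟩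
      · -- m odd, m = 2t+1
        have hT' : (∑ i ∈ Finset.range m, i) = m * t := by
          have h1 : m - 1 = 2 * t := by omega
          have h2 : (∑ i ∈ Finset.range m, i) * 2 = (m * t) * 2 := by
            rw [h2T, h1, ht]; ring
          omega
        exact ⟨t * k, by rw [hT']; ring⟩
      · -- k = (q-1)/m even
        have hk' : (q - 1) / m = k := by
          rw [hk, Nat.mul_div_cancel_left k (by omega)]
        rw [hk'] at hj
        refine ⟨(m - 1) * j, ?_⟩
        calc (∑ i ∈ Finset.range m, i) * (m * k)
            = ((∑ i ∈ Finset.range m, i) * 2) * (m * j) := by rw [hj]; ring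
          _ = m ^ 2 * ((m - 1) * j) := by rw [h2T]; ring
    have hT0 : ((((∑ i ∈ Finset.range m, i) * (m * k) : ℕ)) : ZMod (m ^ 2)) = 0 :=
      (ZMod.natCast_eq_zero_iff _ _).mpr hT
    rw [Nat.cast_mul, Nat.cast_mul] at hT0
    rw [hT0] at hs
    -- hence l*s ≡ l*m mod m^2
    have hls : ((l * s : ℕ) : ZMod (m ^ 2)) = ((l * m : ℕ) : ZMod (m ^ 2)) := by
      push_cast
      rw [hs]; ring
    have h0 : ((l * s : ℕ) : ZMod (m ^ 2)) = 0 :=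
      (ZMod.natCast_eq_zero_iff _ _).mpr hdvd2
    rw [hls] at h0
    have hdvd3 : m ^ 2 ∣ l * m := (ZMod.natCast_eq_zero_iff _ _).mp h0
    have hlt : l * m < m ^ 2 := by
      have : l < m := by omega
      calc l * m < m * m := Nat.mul_lt_mul_of_lt_of_le this (le_refl m) (by omega)
        _ = m ^ 2 := (sq m).symm
    have hpos : 0 < l * m := by positivity
    have := Nat.le_of_dvd hpos hdvd3
    omega
end

section
/- Let K be a field, σ a ring endomorphism of K, m ≥ 2, a ∈ K, and S_f the algebra on K^m associated with f(t) = t^m − a ∈ K[t;σ]. For g = Σ_{j=0}^{m−1} g_j t^j ∈ S_f define the matrix W(g) ∈ M_m(K) by W(g)_{ij} = σ^i(g_{j−i}) if i ≤ j and W(g)_{ij} = σ^i(g_{m−i+j})·σ^j(a) if i > j (indices 0 ≤ i,j ≤ m−1). Then: (i) for all h, g ∈ S_f, the coordinate row vector of h ∘ g equals the product of the coordinate row vector of h with the matrix W(g); (ii) if a nonzero g ∈ S_f is not a right zero divisor, then det W(g) ≠ 0; (iii) S_f has no nonzero zero divisors if and only if det W(g) ≠ 0 for every nonzero g ∈ S_f,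 if and only if right multiplication by every nonzero element of S_f is bijective. -/
open Finset

/-- Coordinates of the product in the algebra `S_f`, `f(t) = t^m − a ∈ K[t;σ]`. -/
def cycMulS (K : Type*) [Field K] (m : ℕ) (σ : K →+* K) (a : K)
    (u v : Fin m → K) : Fin m → K :=
  fun k =>
    (∑ i : Fin m, ∑ j : Fin m,
        if (i : ℕ) + (j : ℕ) = (k : ℕ) then u i * (⇑σ)^[(i : ℕ)] (v j) else 0) +
      ∑ i : Fin m, ∑ j : Fin m,
        if (i : ℕ) + (j : ℕ) = (k : ℕ) + m then
          u i * (⇑σ)^[(i : ℕ)] (v j) * (⇑σ)^[(k : ℕ)] a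
        else 0

/-- The matrix `W(g)` of right multiplication by `g` in `S_f`:
`W(g)_{ij} = σ^i(g_{j−i})` if `i ≤ j` and `W(g)_{ij} = σ^i(g_{m−i+j})·σ^j(a)` if `i > j`. -/
def Wmat (K : Type*) [Field K] (m : ℕ) (σ : K →+* K) (a : K) (g : Fin m → K) :
    Matrix (Fin m) (Fin m) K :=
  fun i j =>
    if h : (i : ℕ) ≤ (j : ℕ) then
      (⇑σ)^[(i : ℕ)] (g ⟨(j : ℕ) - (i : ℕ), by have := j.isLt; omega⟩)
    else
      (⇑σ)^[(i : ℕ)] (g ⟨m - (i : ℕ) + (j : ℕ), by have := i.isLt; have := j.isLt; omega⟩) *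
        (⇑σ)^[(j : ℕ)] a

lemma cycMulS_eq_vecMul (K : Type*) [Field K] (m : ℕ) (σ : K →+* K) (a : K)
    (h g : Fin m → K) : cycMulS K m σ a h g = Matrix.vecMul h (Wmat K m σ a g) := by
  funext k
  simp only [cycMulS, Matrix.vecMul, dotProduct, Wmat]
  rw [← Finset.sum_add_distrib]
  refine Finset.sum_congr rfl fun i _ => ?_
  have hk := k.isLt
  have hi := i.isLt
  by_cases hik : (i : ℕ) ≤ (k : ℕ)
  · rw [dif_pos hik]
    rw [Finset.sum_eq_single (⟨(k : ℕ) - (i : ℕ), by omega⟩ : Fin m),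
      Finset.sum_eq_zero (fun j _ => ?_)]
    · rw [if_pos (by omega : (i : ℕ) + ((k : ℕ) - (i : ℕ)) = (k : ℕ))]
      ring
    · have hj := j.isLt
      rw [if_neg (by omega)]
    · intro j _ hj
      rw [if_neg]
      intro habs
      exact hj (by ext; simp; omega)
    · intro habs; exact absurd (Finset.mem_univ _) habs
  · rw [dif_neg hik]
    rw [Finset.sum_eq_zero (fun j _ => ?_),
      Finset.sum_eq_single (⟨(k : ℕ) + m - (i : ℕ), by omega⟩ : Fin m)]
    · rw [if_pos (by omega : (i : ℕ) + ((k : ℕ) + m - (i : ℕ)) = (k : ℕ) + m)]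
      have : (⟨(k : ℕ) + m - (i : ℕ), by omega⟩ : Fin m) =
          ⟨m - (i : ℕ) + (k : ℕ), by omega⟩ := by ext; simp; omega
      rw [this]; ring
    · intro j _ hj
      rw [if_neg]
      intro habs
      exact hj (by ext; simp; omega)
    · intro habs; exact absurd (Finset.mem_univ _) habs
    · rw [if_neg (by omega)]

/-- Let `K` be a field, `σ` a ring endomorphism of `K`, `m ≥ 2`, `a ∈ K`
and `S_f` the algebra associated with `f(t) = t^m − a ∈ K[t;σ]`. Then:
(i) for all `h, g ∈ S_f`, the coordinate row vector of `h ∘ g` is the product of the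
coordinate row vector of `h` with the matrix `W(g)`;
(ii) if a nonzero `g ∈ S_f` is not a right zero divisor then `det W(g) ≠ 0`;
(iii) `S_f` has no nonzero zero divisors iff `det W(g) ≠ 0` for every nonzero `g`, iff
right multiplication by every nonzero element of `S_f` is bijective. -/
theorem stmt19 (K : Type*) [Field K] (m : ℕ) (hm : 2 ≤ m) (σ : K →+* K) (a : K) :
    (∀ h g : Fin m → K, cycMulS K m σ a h g = Matrix.vecMul h (Wmat K m σ a g)) ∧
    (∀ g : Fin m → K, g ≠ 0 → (∀ h : Fin m → K, h ≠ 0 → cycMulS K m σ a h g ≠ 0) →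
      (Wmat K m σ a g).det ≠ 0) ∧
    ((∀ u v : Fin m → K, cycMulS K m σ a u v = 0 → u = 0 ∨ v = 0) ↔
      ∀ g : Fin m → K, g ≠ 0 → (Wmat K m σ a g).det ≠ 0) ∧
    ((∀ u v : Fin m → K, cycMulS K m σ a u v = 0 → u = 0 ∨ v = 0) ↔
      ∀ g : Fin m → K, g ≠ 0 → Function.Bijective fun h => cycMulS K m σ a h g) := by
  have key := cycMulS_eq_vecMul K m σ a
  have part2 : ∀ g : Fin m → K, g ≠ 0 →
      (∀ h : Fin m → K, h ≠ 0 → cycMulS K m σ a h g ≠ 0) → (Wmat K m σ a g).det ≠ 0 := by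
    intro g hg hzd hdet
    obtain ⟨v, hv, hv0⟩ := Matrix.exists_vecMul_eq_zero_iff.mpr hdet
    exact hzd v hv (by rw [key]; exact hv0)
  have iff1 : (∀ u v : Fin m → K, cycMulS K m σ a u v = 0 → u = 0 ∨ v = 0) ↔
      ∀ g : Fin m → K, g ≠ 0 → (Wmat K m σ a g).det ≠ 0 := by
    constructor
    · intro hnzd g hg
      refine part2 g hg fun h hh hc => ?_
      rcases hnzd h g hc with h0 | h0
      · exact hh h0
      · exact hg h0
    · intro hdet u v huv
      by_cases hv : v = 0
      · exact Or.inr hv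
      · refine Or.inl ?_
        by_contra hu
        exact hdet v hv (Matrix.exists_vecMul_eq_zero_iff.mp ⟨u, hu, by rw [← key]; exact huv⟩)
  refine ⟨key, part2, iff1, iff1.trans ?_⟩
  refine forall_congr' fun g => imp_congr_right fun hg => ?_
  have heq : (fun h => cycMulS K m σ a h g) = (Wmat K m σ a g).vecMul := by
    funext h; exact key h g
  rw [heq]
  constructor
  · intro hdet
    have hu : IsUnit (Wmat K m σ a g) := by
      rwa [Matrix.isUnit_iff_isUnit_det, isUnit_iff_ne_zero]
    exact ⟨Matrix.vecMul_injective_iff_isUnit.mpr hu, Matrix.vecMul_surjective_iff_isUnit.mpr hu⟩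
  · intro hbij
    rw [← isUnit_iff_ne_zero, ← Matrix.isUnit_iff_isUnit_det,
      ← Matrix.vecMul_injective_iff_isUnit]
    exact hbij.1
end
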